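/- arXiv:gr-qc/0611011 — 6 statements merged into one kernel-verified Lean document; each statement's English description precedes it below -/
import Mathlib

section
/- Let π : ℝ³ → ℝ³ be a continuously differentiable, compactly supported vector field, and let ψ : ℝ³ → Matrix(3×3, ℝ) be a continuously differentiable, compactly supported field of antisymmetric matrices (ψ_{ji} = −ψ_{ij}). Then the integration-by-parts identity on the half-space {x ∈ ℝ³ : x₁ > 0} holds: ∫_{x₁>0} [ Σ_{i,j} ½(∂ⱼπᵢ − ∂ᵢπⱼ)ψ_{ji} + Σᵢ (Σⱼ ∂ⱼψ_{ji}) πᵢ ] dx = − ∫_{ℝ²} Σ_{A=2,3} π_A(0, x₂, x₃) ψ_{1A}(0, x₂, x₃) dx₂ dx₃. -/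
open MeasureTheory Set Filter

/-- Partial derivative in direction `i` of a function on `ℝ³`. -/
noncomputable def pd (i : Fin 3) (f : (Fin 3 → ℝ) → ℝ) (x : Fin 3 → ℝ) : ℝ :=
  fderiv ℝ f x (Pi.single i 1)

/-- Insert `t` into `y` at position `j` (constant-family version of `Fin.insertNth`). -/
def ins (j : Fin 3) (t : ℝ) (y : Fin 2 → ℝ) : Fin 3 → ℝ :=
  Fin.insertNth j t y

lemma aux_insertNth_eq (j : Fin 3) (y : Fin 2 → ℝ) (t : ℝ) :
    ins j t y = ins j 0 y + t • (Pi.single j 1 : Fin 3 → ℝ) := by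
  ext k
  rcases eq_or_ne k j with rfl | hk
  · simp [ins]
  · obtain ⟨k', rfl⟩ := Fin.exists_succAbove_eq hk
    simp [ins, Fin.insertNth_apply_succAbove, Pi.single_eq_of_ne (Fin.succAbove_ne j k')]

lemma aux_hasDerivAt (f : (Fin 3 → ℝ) → ℝ) (hf : ContDiff ℝ 1 f) (j : Fin 3)
    (y : Fin 2 → ℝ) (t : ℝ) :
    HasDerivAt (fun s => f (ins j s y)) (pd j f (ins j t y)) t := by
  have h1 : HasDerivAt (fun s : ℝ => ins j s y) (Pi.single j 1) t := by
    have heq : (fun s : ℝ => ins j s y)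
        = fun s => ins j 0 y + s • (Pi.single j 1 : Fin 3 → ℝ) := funext (aux_insertNth_eq j y)
    rw [heq]
    simpa using (((hasDerivAt_id t).smul_const (Pi.single j (1:ℝ))).const_add (ins j 0 y))
  have h2 := (hf.differentiable one_ne_zero (ins j t y)).hasFDerivAt
  simpa [pd, Function.comp_def] using h2.comp_hasDerivAt t h1

lemma aux_isometry (j : Fin 3) (y : Fin 2 → ℝ) :
    Isometry (fun t : ℝ => ins j t y) := by
  refine Isometry.of_dist_eq fun a b => ?_
  rw [dist_eq_norm, dist_eq_norm]
  have h : ins j a y - ins j b y = (a - b) • (Pi.single j 1 : Fin 3 → ℝ) := by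
    rw [aux_insertNth_eq j y a, aux_insertNth_eq j y b, sub_smul]
    abel
  rw [h, norm_smul, Pi.norm_single, norm_one, mul_one]

lemma aux_comp_contDiff (f : (Fin 3 → ℝ) → ℝ) (hf : ContDiff ℝ 1 f) (j : Fin 3)
    (y : Fin 2 → ℝ) : ContDiff ℝ 1 (fun t : ℝ => f (ins j t y)) := by
  apply hf.comp
  have heq : (fun s : ℝ => ins j s y)
      = fun s => ins j 0 y + s • (Pi.single j 1 : Fin 3 → ℝ) := funext (aux_insertNth_eq j y)
  rw [heq]
  exact contDiff_const.add (contDiff_id.smul contDiff_const)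

lemma aux_comp_support (f : (Fin 3 → ℝ) → ℝ) (hf : HasCompactSupport f) (j : Fin 3)
    (y : Fin 2 → ℝ) : HasCompactSupport (fun t : ℝ => f (ins j t y)) :=
  hf.comp_isClosedEmbedding (aux_isometry j y).isClosedEmbedding

lemma aux_integral_deriv_univ (g : ℝ → ℝ) (hg : ContDiff ℝ 1 g) (hc : HasCompactSupport g) :
    ∫ t, deriv g t = 0 := by
  have hi : Integrable (deriv g) :=
    (hg.continuous_deriv le_rfl).integrable_of_hasCompactSupport hc.deriv
  rw [← intervalIntegral.integral_Iic_add_Ioi (b := (0:ℝ)) hi.integrableOn hi.integrableOn,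
    hc.integral_Ioi_deriv_eq hg 0, hc.integral_Iic_deriv_eq hg 0]
  ring

lemma aux_pd_cont (G : (Fin 3 → ℝ) → ℝ) (hG : ContDiff ℝ 1 G) (j : Fin 3) :
    Continuous (pd j G) := by
  show Continuous fun x => fderiv ℝ G x (Pi.single j 1)
  exact (ContinuousLinearMap.apply ℝ ℝ (Pi.single j (1:ℝ))).continuous.comp
    (hG.continuous_fderiv one_ne_zero)

lemma aux_pd_supp (G : (Fin 3 → ℝ) → ℝ) (hGc : HasCompactSupport G) (j : Fin 3) :
    HasCompactSupport (pd j G) :=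
  hGc.fderiv_apply (𝕜 := ℝ) (Pi.single j 1)

lemma aux_halfspace (G : (Fin 3 → ℝ) → ℝ) (hG : ContDiff ℝ 1 G)
    (hGc : HasCompactSupport G) (j : Fin 3) :
    ∫ x in {x : Fin 3 → ℝ | 0 < x 0}, pd j G x
      = if j = 0 then - ∫ y : Fin 2 → ℝ, G (Fin.cons 0 y) else 0 := by
  classical
  set e := MeasurableEquiv.piFinSuccAbove (fun _ : Fin 3 => ℝ) j with he
  have mp : MeasurePreserving e volume volume := volume_preserving_piFinSuccAbove _ j
  have hcont := aux_pd_cont G hG j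
  have hsupp := aux_pd_supp G hGc j
  have hint : Integrable (pd j G) volume := hcont.integrable_of_hasCompactSupport hsupp
  have hS : MeasurableSet {x : Fin 3 → ℝ | 0 < x 0} :=
    measurableSet_lt measurable_const (measurable_pi_apply 0)
  have hcomp : (fun z : ℝ × (Fin 2 → ℝ) => pd j G (ins j z.1 z.2)) = (pd j G) ∘ ⇑e.symm := by
    funext z
    simp [Function.comp, ins, he, MeasurableEquiv.piFinSuccAbove_symm_apply,
      Fin.insertNthEquiv]
  have hintc : Integrable (fun z : ℝ × (Fin 2 → ℝ) => pd j G (ins j z.1 z.2))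
      (volume : Measure (ℝ × (Fin 2 → ℝ))) := by
    rw [hcomp]
    exact ((mp.symm e).integrable_comp_emb e.symm.measurableEmbedding).2 hint
  have hderiv : ∀ (y : Fin 2 → ℝ) (t : ℝ),
      pd j G (ins j t y) = deriv (fun s => G (ins j s y)) t :=
    fun y t => ((aux_hasDerivAt G hG j y t).deriv).symm
  have hstep : ∀ T : Set (ℝ × (Fin 2 → ℝ)), e ⁻¹' T = {x : Fin 3 → ℝ | 0 < x 0} →
      ∫ x in {x : Fin 3 → ℝ | 0 < x 0}, pd j G x
        = ∫ z in T, pd j G (ins j z.1 z.2) := by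
    intro T hpre
    calc ∫ x in {x : Fin 3 → ℝ | 0 < x 0}, pd j G x
        = ∫ x in e ⁻¹' T, (fun z : ℝ × (Fin 2 → ℝ) => pd j G (ins j z.1 z.2)) (e x) := by
          rw [hpre]
          refine setIntegral_congr_fun hS fun x _ => ?_
          simp [ins, he, MeasurableEquiv.piFinSuccAbove_apply]
      _ = ∫ z in T, pd j G (ins j z.1 z.2) :=
          mp.setIntegral_preimage_emb e.measurableEmbedding (fun z : ℝ × (Fin 2 → ℝ) => pd j G (ins j z.1 z.2)) T
  rcases eq_or_ne j 0 with rfl | hj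
  · rw [if_pos rfl]
    have hpre : e ⁻¹' (Ioi (0:ℝ) ×ˢ (univ : Set (Fin 2 → ℝ)))
        = {x : Fin 3 → ℝ | 0 < x 0} := by
      ext x
      simp [he, MeasurableEquiv.piFinSuccAbove_apply]
    have hmeas : ((volume : Measure ℝ).restrict (Ioi 0)).prod (volume : Measure (Fin 2 → ℝ))
        = ((volume : Measure ℝ).prod volume).restrict
            (Ioi (0:ℝ) ×ˢ (univ : Set (Fin 2 → ℝ))) := by
      nth_rewrite 1 [← Measure.restrict_univ (μ := (volume : Measure (Fin 2 → ℝ)))]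
      exact Measure.prod_restrict _ _
    rw [hstep _ hpre]
    calc ∫ z in Ioi (0:ℝ) ×ˢ (univ : Set (Fin 2 → ℝ)),
          pd 0 G (ins 0 z.1 z.2)
        = ∫ z, pd 0 G (ins 0 z.1 z.2)
            ∂(((volume : Measure ℝ).restrict (Ioi 0)).prod (volume : Measure (Fin 2 → ℝ))) := by
          rw [hmeas, ← Measure.volume_eq_prod]
      _ = ∫ y : Fin 2 → ℝ, ∫ t in Ioi (0:ℝ), pd 0 G (ins 0 t y) := by
          refine integral_prod_symm _ ?_
          rw [hmeas, ← Measure.volume_eq_prod]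
          exact hintc.integrableOn
      _ = ∫ y : Fin 2 → ℝ, - G (Fin.cons 0 y) := by
          refine integral_congr_ae (ae_of_all _ fun y => ?_)
          have h1 : ∀ t : ℝ, pd 0 G (ins 0 t y) = deriv (fun s => G (ins 0 s y)) t :=
            hderiv y
          show (∫ t in Ioi (0:ℝ), pd 0 G (ins 0 t y)) = - G (Fin.cons 0 y)
          rw [integral_congr_ae (ae_of_all _ fun t => h1 t),
            (aux_comp_support G hGc 0 y).integral_Ioi_deriv_eq (aux_comp_contDiff G hG 0 y) 0]
          have : ins 0 0 y = Fin.cons 0 y := by simp [ins]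
          rw [this]
      _ = - ∫ y : Fin 2 → ℝ, G (Fin.cons 0 y) := integral_neg _
  · rw [if_neg hj]
    have hpre : e ⁻¹' ((univ : Set ℝ) ×ˢ {y : Fin 2 → ℝ | 0 < y 0})
        = {x : Fin 3 → ℝ | 0 < x 0} := by
      ext x
      have h0 : x (j.succAbove 0) = x 0 := by rw [Fin.succAbove_ne_zero_zero hj]
      simp [he, MeasurableEquiv.piFinSuccAbove_apply, Fin.removeNth, h0]
    have hmeas : (volume : Measure ℝ).prod
          ((volume : Measure (Fin 2 → ℝ)).restrict {y : Fin 2 → ℝ | 0 < y 0})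
        = ((volume : Measure ℝ).prod volume).restrict
            ((univ : Set ℝ) ×ˢ {y : Fin 2 → ℝ | 0 < y 0}) := by
      nth_rewrite 1 [← Measure.restrict_univ (μ := (volume : Measure ℝ))]
      exact Measure.prod_restrict _ _
    rw [hstep _ hpre]
    calc ∫ z in (univ : Set ℝ) ×ˢ {y : Fin 2 → ℝ | 0 < y 0}, pd j G (ins j z.1 z.2)
        = ∫ z, pd j G (ins j z.1 z.2)
            ∂((volume : Measure ℝ).prod
              ((volume : Measure (Fin 2 → ℝ)).restrict {y : Fin 2 → ℝ | 0 < y 0})) := by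
          rw [hmeas, ← Measure.volume_eq_prod]
      _ = ∫ y in {y : Fin 2 → ℝ | 0 < y 0}, ∫ t : ℝ, pd j G (ins j t y) := by
          refine integral_prod_symm _ ?_
          rw [hmeas, ← Measure.volume_eq_prod]
          exact hintc.integrableOn
      _ = 0 := by
          have hz : ∀ y : Fin 2 → ℝ, ∫ t : ℝ, pd j G (ins j t y) = 0 := by
            intro y
            rw [integral_congr_ae (ae_of_all _ fun t => hderiv y t)]
            exact aux_integral_deriv_univ _ (aux_comp_contDiff G hG j y)
              (aux_comp_support G hGc j y)
          rw [integral_congr_ae (ae_of_all _ fun y => hz y)]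
          simp

/-- Integration by parts on the half-space `{x₁ > 0}`: for a `C¹` compactly supported
vector field `π` and a `C¹` compactly supported antisymmetric matrix field `ψ`,
`∫_{x₁>0} Σᵢⱼ ∂_{[j}π_{i]} ψ_{ji} + Σᵢ (∂ʲψ_{ji}) πᵢ dx
  = −∫_{ℝ²} Σ_{A=2,3} π_A ψ_{1A} dx₂ dx₃` on the boundary plane `{x₁ = 0}`. -/
theorem half_space_integration_by_parts
    (π : (Fin 3 → ℝ) → Fin 3 → ℝ) (ψ : (Fin 3 → ℝ) → Fin 3 → Fin 3 → ℝ)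
    (hπ : ContDiff ℝ 1 π) (hψ : ContDiff ℝ 1 ψ)
    (hπc : HasCompactSupport π) (hψc : HasCompactSupport ψ)
    (hanti : ∀ (x : Fin 3 → ℝ) (i j : Fin 3), ψ x j i = - ψ x i j) :
    (∫ x in {x : Fin 3 → ℝ | 0 < x 0},
      ((∑ i : Fin 3, ∑ j : Fin 3,
          ((pd j (fun y => π y i) x - pd i (fun y => π y j) x) / 2) * ψ x j i) +
        ∑ i : Fin 3, (∑ j : Fin 3, pd j (fun y => ψ y j i) x) * π x i)) =
    - ∫ p : ℝ × ℝ, ∑ A ∈ ({1, 2} : Finset (Fin 3)),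
        π ![0, p.1, p.2] A * ψ ![0, p.1, p.2] 0 A := by
  classical
  set F : Fin 3 → (Fin 3 → ℝ) → ℝ := fun j x => ∑ i : Fin 3, π x i * ψ x j i with hF
  have hπi : ∀ i, ContDiff ℝ 1 (fun y => π y i) := fun i => (contDiff_pi.1 hπ) i
  have hψji : ∀ j i, ContDiff ℝ 1 (fun y => ψ y j i) := fun j i =>
    (contDiff_pi.1 ((contDiff_pi.1 hψ) j)) i
  have hdπ : ∀ i x, DifferentiableAt ℝ (fun y => π y i) x := fun i x =>
    ((hπi i).differentiable one_ne_zero) x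
  have hdψ : ∀ j i x, DifferentiableAt ℝ (fun y => ψ y j i) x := fun j i x =>
    ((hψji j i).differentiable one_ne_zero) x
  have hFd : ∀ j, ContDiff ℝ 1 (F j) := fun j =>
    ContDiff.sum fun i _ => (hπi i).mul (hψji j i)
  have hFc : ∀ j, HasCompactSupport (F j) := by
    intro j
    apply hπc.mono'
    intro x hx
    apply subset_closure
    simp only [Function.mem_support, ne_eq] at hx ⊢
    intro h0
    exact hx (by simp [hF, h0])
  have pdF : ∀ (j : Fin 3) (x : Fin 3 → ℝ), pd j (F j) x
      = ∑ i : Fin 3, (pd j (fun y => π y i) x * ψ x j i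
          + π x i * pd j (fun y => ψ y j i) x) := by
    intro j x
    have hsum : pd j (F j) x
        = ∑ i : Fin 3, fderiv ℝ (fun y => π y i * ψ y j i) x (Pi.single j 1) := by
      show fderiv ℝ (fun y => ∑ i : Fin 3, π y i * ψ y j i) x (Pi.single j 1) = _
      rw [fderiv_fun_sum fun i _ => (hdπ i x).fun_mul (hdψ j i x), ContinuousLinearMap.sum_apply]
    rw [hsum]
    refine Finset.sum_congr rfl fun i _ => ?_
    rw [fderiv_fun_mul (hdπ i x) (hdψ j i x)]
    simp only [pd, ContinuousLinearMap.add_apply, ContinuousLinearMap.smul_apply, smul_eq_mul]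
    ring
  have point : ∀ x : Fin 3 → ℝ,
      ((∑ i : Fin 3, ∑ j : Fin 3,
          ((pd j (fun y => π y i) x - pd i (fun y => π y j) x) / 2) * ψ x j i) +
        ∑ i : Fin 3, (∑ j : Fin 3, pd j (fun y => ψ y j i) x) * π x i)
      = ∑ j : Fin 3, pd j (F j) x := by
    intro x
    have h00 : ψ x 0 0 = 0 := by have := hanti x 0 0; linarith
    have h11 : ψ x 1 1 = 0 := by have := hanti x 1 1; linarith
    have h22 : ψ x 2 2 = 0 := by have := hanti x 2 2; linarith
    have h10 : ψ x 1 0 = - ψ x 0 1 := hanti x 0 1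
    have h20 : ψ x 2 0 = - ψ x 0 2 := hanti x 0 2
    have h21 : ψ x 2 1 = - ψ x 1 2 := hanti x 1 2
    simp only [pdF, Fin.sum_univ_three]
    rw [h00, h11, h22, h10, h20, h21]
    ring
  rw [integral_congr_ae (ae_of_all _ point)]
  rw [integral_finset_sum _ fun j _ =>
    ((aux_pd_cont _ (hFd j) j).integrable_of_hasCompactSupport
      (aux_pd_supp _ (hFc j) j)).integrableOn]
  rw [Fin.sum_univ_three, aux_halfspace (F 0) (hFd 0) (hFc 0) 0,
    aux_halfspace (F 1) (hFd 1) (hFc 1) 1, aux_halfspace (F 2) (hFd 2) (hFc 2) 2]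
  rw [if_pos rfl, if_neg (by decide : ¬(1 : Fin 3) = 0), if_neg (by decide : ¬(2 : Fin 3) = 0),
    add_zero, add_zero]
  have mp2 : MeasurePreserving (⇑(MeasurableEquiv.finTwoArrow (α := ℝ)).symm)
      volume volume :=
    MeasurePreserving.symm MeasurableEquiv.finTwoArrow (volume_preserving_finTwoArrow ℝ)
  have hbd : (∫ y : Fin 2 → ℝ, F 0 (Fin.cons 0 y))
      = ∫ p : ℝ × ℝ, ∑ A ∈ ({1, 2} : Finset (Fin 3)),
          π ![0, p.1, p.2] A * ψ ![0, p.1, p.2] 0 A := by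
    rw [← mp2.integral_comp (MeasurableEquiv.finTwoArrow (α := ℝ)).symm.measurableEmbedding
      (fun y => F 0 (Fin.cons 0 y))]
    refine integral_congr_ae (ae_of_all _ fun p => ?_)
    show F 0 (Fin.cons (0:ℝ) ((MeasurableEquiv.finTwoArrow (α := ℝ)).symm p))
      = ∑ A ∈ ({1, 2} : Finset (Fin 3)), π ![0, p.1, p.2] A * ψ ![0, p.1, p.2] 0 A
    have hv : (Fin.cons (0:ℝ) ((MeasurableEquiv.finTwoArrow (α := ℝ)).symm p) : Fin 3 → ℝ)
        = ![0, p.1, p.2] := by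
      funext k
      fin_cases k <;> rfl
    rw [hv]
    have h00 : ψ ![0, p.1, p.2] 0 0 = 0 := by have := hanti ![0, p.1, p.2] 0 0; linarith
    rw [show (∑ A ∈ ({1, 2} : Finset (Fin 3)), π ![0, p.1, p.2] A * ψ ![0, p.1, p.2] 0 A)
        = π ![0, p.1, p.2] 1 * ψ ![0, p.1, p.2] 0 1 + π ![0, p.1, p.2] 2 * ψ ![0, p.1, p.2] 0 2
      from Finset.sum_pair (by decide)]
    simp [hF, Fin.sum_univ_three, h00]
  rw [hbd]
end

section
/- Let u : ℝ × ℝ³ → ℝ³ be three times continuously differentiable and satisfy the vector wave equation ∂ₜ²uᵢ = Δuᵢ. Write C = Σᵢ ∂ᵢuᵢ, take the normal direction to be x₁ and let A range over the tangential directions 2,3. Then the following two identities hold pointwise: ∂ₜC + ∂₁C = ∂ₜ(∂ₜu₁ + ∂₁u₁) + Σ_A ∂_A(∂ₜu_A + ∂₁u_A − ∂_A u₁), and ∂ₜC − ∂₁C = −∂ₜ(∂ₜu₁ − ∂₁u₁) + Σ_A ∂_A(∂ₜu_A − ∂₁u_A + ∂_A u₁). -/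
private lemma contDiff_D (f : ℝ × (Fin 3 → ℝ) → ℝ) (hf : ContDiff ℝ 3 f) (v : ℝ × (Fin 3 → ℝ)) :
    ContDiff ℝ 2 (fun q => fderiv ℝ f q v) := by
  have h : ContDiff ℝ 2 (fderiv ℝ f) := hf.fderiv_right (by norm_num)
  exact h.clm_apply contDiff_const

private lemma D_comm (f : ℝ × (Fin 3 → ℝ) → ℝ) (hf : ContDiff ℝ 3 f) (v w p) :
    fderiv ℝ (fun q => fderiv ℝ f q v) p w = fderiv ℝ (fun q => fderiv ℝ f q w) p v := by
  have hd : DifferentiableAt ℝ (fderiv ℝ f) p :=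
    ((hf.fderiv_right (m := 2) (by norm_num)).differentiable (by norm_num)) p
  have e1 := fderiv_clm_apply (c := fderiv ℝ f) hd (differentiableAt_const v)
  have e2 := fderiv_clm_apply (c := fderiv ℝ f) hd (differentiableAt_const w)
  have hsym : IsSymmSndFDerivAt ℝ f p := (hf.contDiffAt).isSymmSndFDerivAt (by norm_num)
  have := hsym w v
  simp [e1, e2, this]

/-- Time derivative of a function on `ℝ × ℝ³`. -/
noncomputable def dt (f : ℝ × (Fin 3 → ℝ) → ℝ) (p : ℝ × (Fin 3 → ℝ)) : ℝ :=
  fderiv ℝ f p (1, 0)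

/-- Spatial partial derivative in direction `i` of a function on `ℝ × ℝ³`. -/
noncomputable def dx (i : Fin 3) (f : ℝ × (Fin 3 → ℝ) → ℝ) (p : ℝ × (Fin 3 → ℝ)) : ℝ :=
  fderiv ℝ f p (0, Pi.single i 1)

/-- For a `C³` solution of the vector wave equation `∂ₜ²uᵢ = Δuᵢ`, with normal direction
`x₁` (index `0`) and tangential directions `A ∈ {1, 2}`, the constraint quantity
`C = Σᵢ ∂ᵢuᵢ` satisfies the pointwise identities
`∂ₜC + ∂₁C = ∂ₜ(∂ₜu₁ + ∂₁u₁) + Σ_A ∂_A(∂ₜu_A + ∂₁u_A − ∂_A u₁)` and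
`∂ₜC − ∂₁C = −∂ₜ(∂ₜu₁ − ∂₁u₁) + Σ_A ∂_A(∂ₜu_A − ∂₁u_A + ∂_A u₁)`. -/
theorem constraint_characteristic_identities
    (u : ℝ × (Fin 3 → ℝ) → Fin 3 → ℝ) (hu : ContDiff ℝ 3 u)
    (hwave : ∀ (p : ℝ × (Fin 3 → ℝ)) (i : Fin 3),
      dt (dt (fun q => u q i)) p = ∑ j : Fin 3, dx j (dx j (fun q => u q i)) p) :
    ∀ p : ℝ × (Fin 3 → ℝ),
      (dt (fun q => ∑ i : Fin 3, dx i (fun q' => u q' i) q) p +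
          dx 0 (fun q => ∑ i : Fin 3, dx i (fun q' => u q' i) q) p =
        dt (fun q => dt (fun q' => u q' 0) q + dx 0 (fun q' => u q' 0) q) p +
          ∑ A ∈ ({1, 2} : Finset (Fin 3)),
            dx A (fun q => dt (fun q' => u q' A) q + dx 0 (fun q' => u q' A) q -
              dx A (fun q' => u q' 0) q) p) ∧
      (dt (fun q => ∑ i : Fin 3, dx i (fun q' => u q' i) q) p -
          dx 0 (fun q => ∑ i : Fin 3, dx i (fun q' => u q' i) q) p =
        - dt (fun q => dt (fun q' => u q' 0) q - dx 0 (fun q' => u q' 0) q) p +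
          ∑ A ∈ ({1, 2} : Finset (Fin 3)),
            dx A (fun q => dt (fun q' => u q' A) q - dx 0 (fun q' => u q' A) q +
              dx A (fun q' => u q' 0) q) p) := by
  intro p
  have hf : ∀ i, ContDiff ℝ 3 (fun q => u q i) := fun i => contDiff_pi.mp hu i
  have hdiff : ∀ (i : Fin 3) v, Differentiable ℝ (fun q => fderiv ℝ (fun q' => u q' i) q v) :=
    fun i v => (contDiff_D _ (hf i) v).differentiable (by norm_num)
  set et : ℝ × (Fin 3 → ℝ) := ((1:ℝ), 0) with het
  set ex : Fin 3 → ℝ × (Fin 3 → ℝ) := fun i => ((0:ℝ), Pi.single i 1) with hex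
  -- second derivative notation
  set D2 : (ℝ × (Fin 3 → ℝ)) → (ℝ × (Fin 3 → ℝ)) → Fin 3 → ℝ :=
    fun v w i => fderiv ℝ (fun q => fderiv ℝ (fun q' => u q' i) q w) p v with hD2
  -- derivative of the constraint sum
  have hA : ∀ v, fderiv ℝ (fun q => ∑ i : Fin 3, dx i (fun q' => u q' i) q) p v
      = ∑ i : Fin 3, D2 v (ex i) i := by
    intro v
    have he : (fun q => ∑ i : Fin 3, dx i (fun q' => u q' i) q)
        = fun q => ∑ i : Fin 3, fderiv ℝ (fun q' => u q' i) q (ex i) := rfl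
    rw [he, fderiv_fun_sum (fun i _ => (hdiff i (ex i)).differentiableAt)]
    simp [hD2]
  -- derivative of a sum of two first derivatives
  have hadd : ∀ (i j : Fin 3) (w₁ w₂ v : ℝ × (Fin 3 → ℝ)),
      fderiv ℝ (fun q => fderiv ℝ (fun q' => u q' i) q w₁ +
        fderiv ℝ (fun q' => u q' j) q w₂) p v = D2 v w₁ i + D2 v w₂ j := by
    intro i j w₁ w₂ v
    rw [fderiv_fun_add ((hdiff i w₁).differentiableAt) ((hdiff j w₂).differentiableAt)]
    simp [hD2]
  have hsub : ∀ (i j : Fin 3) (w₁ w₂ v : ℝ × (Fin 3 → ℝ)),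
      fderiv ℝ (fun q => fderiv ℝ (fun q' => u q' i) q w₁ -
        fderiv ℝ (fun q' => u q' j) q w₂) p v = D2 v w₁ i - D2 v w₂ j := by
    intro i j w₁ w₂ v
    rw [fderiv_fun_sub ((hdiff i w₁).differentiableAt) ((hdiff j w₂).differentiableAt)]
    simp [hD2]
  have haddsub : ∀ (i j k : Fin 3) (w₁ w₂ w₃ v : ℝ × (Fin 3 → ℝ)),
      fderiv ℝ (fun q => fderiv ℝ (fun q' => u q' i) q w₁ +
        fderiv ℝ (fun q' => u q' j) q w₂ - fderiv ℝ (fun q' => u q' k) q w₃) p v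
      = D2 v w₁ i + D2 v w₂ j - D2 v w₃ k := by
    intro i j k w₁ w₂ w₃ v
    rw [fderiv_fun_sub (((hdiff i w₁).fun_add (hdiff j w₂)).differentiableAt)
      ((hdiff k w₃).differentiableAt),
      fderiv_fun_add ((hdiff i w₁).differentiableAt) ((hdiff j w₂).differentiableAt)]
    simp [hD2]
  have hsubadd : ∀ (i j k : Fin 3) (w₁ w₂ w₃ v : ℝ × (Fin 3 → ℝ)),
      fderiv ℝ (fun q => fderiv ℝ (fun q' => u q' i) q w₁ -
        fderiv ℝ (fun q' => u q' j) q w₂ + fderiv ℝ (fun q' => u q' k) q w₃) p v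
      = D2 v w₁ i - D2 v w₂ j + D2 v w₃ k := by
    intro i j k w₁ w₂ w₃ v
    rw [fderiv_fun_add (((hdiff i w₁).fun_sub (hdiff j w₂)).differentiableAt)
      ((hdiff k w₃).differentiableAt),
      fderiv_fun_sub ((hdiff i w₁).differentiableAt) ((hdiff j w₂).differentiableAt)]
    simp [hD2]
  -- commutation and wave, in D2 form
  have hcomm : ∀ (i : Fin 3) (v w), D2 v w i = D2 w v i := fun i v w => D_comm _ (hf i) w v p
  have hw : ∀ i : Fin 3, D2 et et i = D2 (ex 0) (ex 0) i + D2 (ex 1) (ex 1) i +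
      D2 (ex 2) (ex 2) i := by
    intro i
    have := hwave p i
    change fderiv ℝ (fun q => fderiv ℝ (fun q' => u q' i) q (1, 0)) p (1, 0) =
      ∑ j : Fin 3, fderiv ℝ (fun q => fderiv ℝ (fun q' => u q' i) q (0, Pi.single j 1)) p
        (0, Pi.single j 1) at this
    simpa [dt, dx, Fin.sum_univ_three, hD2, het, hex, add_assoc] using this
  have hpair : ∀ (F : Fin 3 → ℝ), ∑ A ∈ ({1, 2} : Finset (Fin 3)), F A = F 1 + F 2 :=
    fun F => Finset.sum_pair (by decide)
  constructor
  · show fderiv ℝ _ p et + fderiv ℝ _ p (ex 0) = fderiv ℝ _ p et + _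
    rw [hA et, hA (ex 0), hpair]
    show _ = fderiv ℝ (fun q => fderiv ℝ (fun q' => u q' 0) q et +
        fderiv ℝ (fun q' => u q' 0) q (ex 0)) p et +
      (fderiv ℝ (fun q => fderiv ℝ (fun q' => u q' 1) q et +
        fderiv ℝ (fun q' => u q' 1) q (ex 0) -
        fderiv ℝ (fun q' => u q' 0) q (ex 1)) p (ex 1) +
      fderiv ℝ (fun q => fderiv ℝ (fun q' => u q' 2) q et +
        fderiv ℝ (fun q' => u q' 2) q (ex 0) -
        fderiv ℝ (fun q' => u q' 0) q (ex 2)) p (ex 2))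
    rw [hadd, haddsub, haddsub, Fin.sum_univ_three, Fin.sum_univ_three]
    have c1 := hcomm 1 (ex 1) et
    have c2 := hcomm 2 (ex 2) et
    have c3 := hcomm 1 (ex 1) (ex 0)
    have c4 := hcomm 2 (ex 2) (ex 0)
    have w0 := hw 0
    linarith
  · show fderiv ℝ _ p et - fderiv ℝ _ p (ex 0) = - fderiv ℝ _ p et + _
    rw [hA et, hA (ex 0), hpair]
    show _ = - fderiv ℝ (fun q => fderiv ℝ (fun q' => u q' 0) q et -
        fderiv ℝ (fun q' => u q' 0) q (ex 0)) p et +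
      (fderiv ℝ (fun q => fderiv ℝ (fun q' => u q' 1) q et -
        fderiv ℝ (fun q' => u q' 1) q (ex 0) +
        fderiv ℝ (fun q' => u q' 0) q (ex 1)) p (ex 1) +
      fderiv ℝ (fun q => fderiv ℝ (fun q' => u q' 2) q et -
        fderiv ℝ (fun q' => u q' 2) q (ex 0) +
        fderiv ℝ (fun q' => u q' 0) q (ex 2)) p (ex 2))
    rw [hsub, hsubadd, hsubadd, Fin.sum_univ_three, Fin.sum_univ_three]
    have c1 := hcomm 1 (ex 1) et
    have c2 := hcomm 2 (ex 2) et
    have c3 := hcomm 1 (ex 1) (ex 0)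
    have c4 := hcomm 2 (ex 2) (ex 0)
    have w0 := hw 0
    linarith
end

section
/- Let C : ℝ × ℝ³ → ℝ be twice continuously differentiable, satisfy the wave equation ∂ₜ²C = ΔC on the half-space {(t,x) : x₁ > 0}, and suppose there is a compact set S ⊂ ℝ³ such that C(t,·) vanishes outside S for every t. Let α ∈ ℝ with |α| ≤ 1, and suppose the radiative boundary condition ∂ₜC(t, 0, x₂, x₃) − ∂₁C(t, 0, x₂, x₃) = α (∂ₜC(t, 0, x₂, x₃) + ∂₁C(t, 0, x₂, x₃)) holds for all t and (x₂,x₃) ∈ ℝ². Then the energy E(t) = ∫_{x₁>0} ( (∂ₜC)² + Σᵢ (∂ᵢC)² ) dx is nonincreasing in t ≥ 0; in particular, if C(0,·) = 0 and ∂ₜC(0,·) = 0 on the half-space, then C(t,·) = 0 on the half-space for all t ≥ 0. -/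
open MeasureTheory

namespace HalfSpaceAux

variable {f : ℝ × (Fin 3 → ℝ) → ℝ}

lemma contDiff_dt (hf : ContDiff ℝ 2 f) : ContDiff ℝ 1 (dt f) :=
  ((hf.fderiv_right (by norm_num)).clm_apply contDiff_const)

lemma contDiff_dx (i : Fin 3) (hf : ContDiff ℝ 2 f) : ContDiff ℝ 1 (dx i f) :=
  ((hf.fderiv_right (by norm_num)).clm_apply contDiff_const)

lemma continuous_dt' (hf : ContDiff ℝ 1 f) : Continuous (dt f) :=
  (((hf.fderiv_right (m := 0) (by norm_num)).clm_apply contDiff_const)).continuous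

lemma hasDerivAt_time (hf : Differentiable ℝ f) (t : ℝ) (x : Fin 3 → ℝ) :
    HasDerivAt (fun s => f (s, x)) (dt f (t, x)) t := by
  have h1 : HasDerivAt (fun s : ℝ => (s, x)) ((1 : ℝ), (0 : Fin 3 → ℝ)) t :=
    (hasDerivAt_id t).prodMk (hasDerivAt_const t x)
  exact (hf (t, x)).hasFDerivAt.comp_hasDerivAt t h1

lemma hasFDerivAt_space (hf : Differentiable ℝ f) (t : ℝ) (x : Fin 3 → ℝ) :
    HasFDerivAt (fun y => f (t, y))
      ((fderiv ℝ f (t, x)).comp (ContinuousLinearMap.inr ℝ ℝ (Fin 3 → ℝ))) x := by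
  have h1 : HasFDerivAt (fun y : Fin 3 → ℝ => ((t : ℝ), y))
      (ContinuousLinearMap.inr ℝ ℝ (Fin 3 → ℝ)) x :=
    (hasFDerivAt_const t x).prodMk (hasFDerivAt_id x)
  exact (hf (t, x)).hasFDerivAt.comp x h1

lemma fderiv_space (hf : Differentiable ℝ f) (t : ℝ) (x : Fin 3 → ℝ) (i : Fin 3) :
    fderiv ℝ (fun y => f (t, y)) x (Pi.single i 1) = dx i f (t, x) := by
  rw [(hasFDerivAt_space hf t x).fderiv]; rfl

lemma mixed_symm (hf : ContDiff ℝ 2 f) (p : ℝ × (Fin 3 → ℝ)) (i : Fin 3) :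
    dt (dx i f) p = dx i (dt f) p := by
  have hd : ∀ q, HasFDerivAt f (fderiv ℝ f q) q := fun q =>
    (hf.differentiable (by norm_num) q).hasFDerivAt
  have hd2 : HasFDerivAt (fderiv ℝ f) (fderiv ℝ (fderiv ℝ f) p) p := by
    have : Differentiable ℝ (fderiv ℝ f) :=
      (hf.fderiv_right (m := 1) (by norm_num)).differentiable (by norm_num)
    exact (this p).hasFDerivAt
  have hsymm := second_derivative_symmetric hd hd2 (1, 0) (0, Pi.single i 1)
  have e1 : dt (dx i f) p = fderiv ℝ (fderiv ℝ f) p (1, 0) (0, Pi.single i 1) := by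
    unfold dt dx
    have h := (ContinuousLinearMap.apply ℝ ℝ
        ((0 : ℝ), Pi.single i 1)).hasFDerivAt.comp p hd2
    have h' : HasFDerivAt (fun q => fderiv ℝ f q (0, Pi.single i 1))
        ((ContinuousLinearMap.apply ℝ ℝ ((0 : ℝ), Pi.single i 1)).comp
          (fderiv ℝ (fderiv ℝ f) p)) p := h
    rw [h'.fderiv]; rfl
  have e2 : dx i (dt f) p = fderiv ℝ (fderiv ℝ f) p (0, Pi.single i 1) (1, 0) := by
    unfold dt dx
    have h := (ContinuousLinearMap.apply ℝ ℝ
        ((1 : ℝ), (0 : Fin 3 → ℝ))).hasFDerivAt.comp p hd2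
    have h' : HasFDerivAt (fun q => fderiv ℝ f q (1, 0))
        ((ContinuousLinearMap.apply ℝ ℝ ((1 : ℝ), (0 : Fin 3 → ℝ))).comp
          (fderiv ℝ (fderiv ℝ f) p)) p := h
    rw [h'.fderiv]; rfl
  rw [e1, e2, hsymm]

lemma fderiv_eq_zero_of_notMem {S : Set (Fin 3 → ℝ)} (hS : IsClosed S)
    (hsupp : ∀ (t : ℝ) (x : Fin 3 → ℝ), x ∉ S → f (t, x) = 0)
    {t : ℝ} {x : Fin 3 → ℝ} (hx : x ∉ S) : fderiv ℝ f (t, x) = 0 := by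
  have hopen : IsOpen ((Set.univ : Set ℝ) ×ˢ Sᶜ) := isOpen_univ.prod hS.isOpen_compl
  have hmem : (t, x) ∈ (Set.univ : Set ℝ) ×ˢ Sᶜ := ⟨trivial, hx⟩
  have hev : f =ᶠ[nhds (t, x)] (fun _ => 0) := by
    filter_upwards [hopen.mem_nhds hmem] with p hp
    exact hsupp p.1 p.2 hp.2
  rw [hev.fderiv_eq, fderiv_fun_const]; rfl

lemma dx_mul {g : ℝ × (Fin 3 → ℝ) → ℝ} (hf : Differentiable ℝ f) (hg : Differentiable ℝ g)
    (i : Fin 3) (p : ℝ × (Fin 3 → ℝ)) :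
    dx i (fun q => f q * g q) p = dx i f p * g p + f p * dx i g p := by
  unfold dx
  rw [fderiv_fun_mul (hf p) (hg p)]
  simp only [ContinuousLinearMap.add_apply, ContinuousLinearMap.smul_apply, smul_eq_mul]
  ring

end HalfSpaceAux

open HalfSpaceAux

/-- energy density -/
noncomputable def efun (C : ℝ × (Fin 3 → ℝ) → ℝ) (p : ℝ × (Fin 3 → ℝ)) : ℝ :=
  dt C p ^ 2 + ∑ i, dx i C p ^ 2

/-- time derivative of energy density -/
noncomputable def Dfun (C : ℝ × (Fin 3 → ℝ) → ℝ) (p : ℝ × (Fin 3 → ℝ)) : ℝ :=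
  2 * dt C p * dt (dt C) p + ∑ i, 2 * dx i C p * dt (dx i C) p

/-- For a `C²`, spatially compactly supported solution of the wave equation on the
half-space `{x₁ > 0}` satisfying the maximally dissipative boundary condition
`∂ₜC − ∂₁C = α(∂ₜC + ∂₁C)` at `x₁ = 0` with `|α| ≤ 1`, the energy
`E(t) = ∫_{x₁>0} (∂ₜC)² + Σᵢ(∂ᵢC)² dx` is nonincreasing for `t ≥ 0`; in particular,
zero initial data forces `C` to vanish on the half-space for all `t ≥ 0`. -/
theorem half_space_energy_nonincreasing
    (C : ℝ × (Fin 3 → ℝ) → ℝ) (hC : ContDiff ℝ 2 C)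
    (hwave : ∀ p : ℝ × (Fin 3 → ℝ), 0 < p.2 0 →
      dt (dt C) p = ∑ j : Fin 3, dx j (dx j C) p)
    (S : Set (Fin 3 → ℝ)) (hS : IsCompact S)
    (hsupp : ∀ (t : ℝ) (x : Fin 3 → ℝ), x ∉ S → C (t, x) = 0)
    (α : ℝ) (hα : |α| ≤ 1)
    (hbc : ∀ (t : ℝ) (x : Fin 3 → ℝ), x 0 = 0 →
      dt C (t, x) - dx 0 C (t, x) = α * (dt C (t, x) + dx 0 C (t, x))) :
    (∀ t₁ t₂ : ℝ, 0 ≤ t₁ → t₁ ≤ t₂ →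
      (∫ x in {x : Fin 3 → ℝ | 0 < x 0},
          ((dt C (t₂, x)) ^ 2 + ∑ i : Fin 3, (dx i C (t₂, x)) ^ 2)) ≤
      (∫ x in {x : Fin 3 → ℝ | 0 < x 0},
          ((dt C (t₁, x)) ^ 2 + ∑ i : Fin 3, (dx i C (t₁, x)) ^ 2))) ∧
    ((∀ x : Fin 3 → ℝ, 0 < x 0 → C (0, x) = 0) →
     (∀ x : Fin 3 → ℝ, 0 < x 0 → dt C (0, x) = 0) →
      ∀ (t : ℝ) (x : Fin 3 → ℝ), 0 ≤ t → 0 < x 0 → C (t, x) = 0) := by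
  classical
  -- regularity
  have hC1 : ContDiff ℝ 1 C := hC.of_le (by norm_num)
  have hCd : Differentiable ℝ C := hC1.differentiable (by norm_num)
  have hu1 : ContDiff ℝ 1 (dt C) := contDiff_dt hC
  have hv1 : ∀ i, ContDiff ℝ 1 (dx i C) := fun i => contDiff_dx i hC
  have hud : Differentiable ℝ (dt C) := hu1.differentiable (by norm_num)
  have hvd : ∀ i, Differentiable ℝ (dx i C) := fun i => (hv1 i).differentiable (by norm_num)
  have hucont : Continuous (dt C) := hud.continuous
  have hvcont : ∀ i, Continuous (dx i C) := fun i => (hvd i).continuous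
  have huu_cont : Continuous (dt (dt C)) := continuous_dt' hu1
  have huv_cont : ∀ i, Continuous (dt (dx i C)) := fun i => continuous_dt' (hv1 i)
  have hefun_cont : Continuous (efun C) := by
    unfold efun
    exact (hucont.pow 2).add (continuous_finset_sum _ fun i _ => (hvcont i).pow 2)
  have hDfun_cont : Continuous (Dfun C) := by
    unfold Dfun
    exact ((continuous_const.mul hucont).mul huu_cont).add
      (continuous_finset_sum _ fun i _ => (continuous_const.mul (hvcont i)).mul (huv_cont i))
  have he_nonneg : ∀ p, 0 ≤ efun C p := fun p => by
    unfold efun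
    exact add_nonneg (sq_nonneg _) (Finset.sum_nonneg fun i _ => sq_nonneg _)
  -- support facts
  have hu0 : ∀ (t : ℝ) (x : Fin 3 → ℝ), x ∉ S → dt C (t, x) = 0 := by
    intro t x hx
    unfold dt
    rw [fderiv_eq_zero_of_notMem hS.isClosed hsupp hx]; rfl
  have hv0 : ∀ (i : Fin 3) (t : ℝ) (x : Fin 3 → ℝ), x ∉ S → dx i C (t, x) = 0 := by
    intro i t x hx
    unfold dx
    rw [fderiv_eq_zero_of_notMem hS.isClosed hsupp hx]; rfl
  have hsupp_e : ∀ (t : ℝ) (x : Fin 3 → ℝ), x ∉ S → efun C (t, x) = 0 := by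
    intro t x hx
    unfold efun
    simp [hu0 t x hx, hv0 _ t x hx]
  -- bounding box
  obtain ⟨r, hr⟩ := hS.isBounded.subset_closedBall 0
  set M : ℝ := max r 0 with hM
  have hM0 : (0 : ℝ) ≤ M := le_max_right _ _
  have hMS : ∀ x ∈ S, ∀ i, |x i| ≤ M := by
    intro x hx i
    have h1 : ‖x‖ ≤ M := by
      have h2 := hr hx
      rw [Metric.mem_closedBall, dist_zero_right] at h2
      exact h2.trans (le_max_left _ _)
    exact (norm_le_pi_norm x i).trans h1
  set a : Fin 3 → ℝ := fun i => if i = 0 then 0 else -(M + 1) with ha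
  set b : Fin 3 → ℝ := fun _ => M + 1 with hb
  have hab : a ≤ b := by
    intro i
    by_cases h : i = 0 <;> simp [ha, hb, h] <;> linarith
  have hHopen : IsOpen {x : Fin 3 → ℝ | 0 < x 0} :=
    isOpen_lt continuous_const (continuous_apply 0)
  have hae0 : ∀ᵐ x : Fin 3 → ℝ, x 0 ≠ (0 : ℝ) := by
    have h := MeasureTheory.Measure.ae_eval_ne (fun _ : Fin 3 => (volume : Measure ℝ)) 0 (0 : ℝ)
    rwa [← volume_pi] at h
  -- energy on half space = energy on box
  set E : ℝ → ℝ := fun t => ∫ x in Set.Icc a b, efun C (t, x) with hE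
  have hEeq : ∀ t : ℝ,
      (∫ x in {x : Fin 3 → ℝ | 0 < x 0},
        ((dt C (t, x)) ^ 2 + ∑ i : Fin 3, (dx i C (t, x)) ^ 2)) = E t := by
    intro t
    have h1 : (∫ x in {x : Fin 3 → ℝ | 0 < x 0},
        ((dt C (t, x)) ^ 2 + ∑ i : Fin 3, (dx i C (t, x)) ^ 2))
        = ∫ x in {x : Fin 3 → ℝ | 0 < x 0}, efun C (t, x) := rfl
    rw [h1]
    show _ = ∫ x in Set.Icc a b, efun C (t, x)
    rw [← integral_indicator hHopen.measurableSet, ← integral_indicator measurableSet_Icc]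
    apply integral_congr_ae
    filter_upwards [hae0] with x hx
    by_cases hxS : x ∈ S
    · by_cases hH : 0 < x 0
      · have hbox : x ∈ Set.Icc a b := by
          constructor
          · intro i
            by_cases h : i = 0
            · subst h; simp [ha]; linarith
            · simp [ha, h]
              have := hMS x hxS i
              have := abs_le.1 this
              linarith [this.1]
          · intro i
            simp [hb]
            have := abs_le.1 (hMS x hxS i)
            linarith [this.2]
        rw [Set.indicator_of_mem (show x ∈ {x : Fin 3 → ℝ | 0 < x 0} from hH), Set.indicator_of_mem hbox]
      · have hneg : x 0 < 0 := lt_of_le_of_ne (not_lt.1 hH) hx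
        have hnbox : x ∉ Set.Icc a b := by
          intro hmem
          have := hmem.1 0
          simp [ha] at this
          linarith
        rw [Set.indicator_of_notMem (show x ∉ {x : Fin 3 → ℝ | 0 < x 0} from hH), Set.indicator_of_notMem hnbox]
    · by_cases hH : 0 < x 0 <;> by_cases hbox : x ∈ Set.Icc a b <;>
        simp [Set.indicator_apply, hH, hbox, hsupp_e t x hxS]
  -- derivative of energy
  have hdE : ∀ (s : ℝ) (x : Fin 3 → ℝ),
      HasDerivAt (fun τ => efun C (τ, x)) (Dfun C (s, x)) s := by
    intro s x
    have h1 : HasDerivAt (fun τ => dt C (τ, x)) (dt (dt C) (s, x)) s := hasDerivAt_time hud s x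
    have h3 : HasDerivAt (fun τ => dt C (τ, x) ^ 2)
        (2 * dt C (s, x) * dt (dt C) (s, x)) s := by
      simpa using h1.fun_pow 2
    have h4 : HasDerivAt (fun τ => ∑ i, dx i C (τ, x) ^ 2)
        (∑ i, 2 * dx i C (s, x) * dt (dx i C) (s, x)) s := by
      apply HasDerivAt.fun_sum
      intro i _
      simpa using (hasDerivAt_time (hvd i) s x).fun_pow 2
    exact h3.add h4
  have hEderiv : ∀ t₀ : ℝ, HasDerivAt E (∫ x in Set.Icc a b, Dfun C (t₀, x)) t₀ := by
    intro t₀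
    have hK : IsCompact ((Set.Icc (t₀ - 1) (t₀ + 1)) ×ˢ (Set.Icc a b)) :=
      isCompact_Icc.prod isCompact_Icc
    obtain ⟨Mb, hMb⟩ := hK.exists_bound_of_continuousOn hDfun_cont.continuousOn
    have main := hasDerivAt_integral_of_dominated_loc_of_deriv_le
      (μ := volume.restrict (Set.Icc a b))
      (F := fun t x => efun C (t, x)) (F' := fun t x => Dfun C (t, x)) (x₀ := t₀)
      (bound := fun _ => Mb) (s := Metric.ball t₀ 1) (Metric.ball_mem_nhds t₀ one_pos)
      (Filter.Eventually.of_forall fun t =>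
        ((hefun_cont.comp (Continuous.prodMk_right t)).aestronglyMeasurable))
      (((hefun_cont.comp (Continuous.prodMk_right t₀)).locallyIntegrable).integrableOn_isCompact
        isCompact_Icc)
      ((hDfun_cont.comp (Continuous.prodMk_right t₀)).aestronglyMeasurable)
      ?_ ?_ ?_
    · exact main.2
    · filter_upwards [ae_restrict_mem measurableSet_Icc] with x hx s hs
      have hs' : s ∈ Set.Icc (t₀ - 1) (t₀ + 1) := by
        rw [Metric.mem_ball, Real.dist_eq] at hs
        have := abs_lt.1 hs
        constructor <;> linarith [this.1, this.2]
      exact hMb (s, x) ⟨hs', hx⟩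
    · exact (integrableOn_const_iff (by simp)).2 (Or.inr (by
        have : volume (Set.Icc a b) < ⊤ := isCompact_Icc.measure_lt_top
        exact this))
    · filter_upwards with x s _
      exact hdE s x
  -- divergence theorem: derivative of energy is nonpositive
  have hDiv : ∀ t : ℝ, (∫ x in Set.Icc a b, Dfun C (t, x)) ≤ 0 := by
    intro t
    set g : Fin 3 → (Fin 3 → ℝ) → ℝ := fun i x => 2 * (dt C (t, x) * dx i C (t, x)) with hg
    have hslice : ContDiff ℝ 1 (fun x : Fin 3 → ℝ => ((t : ℝ), x)) :=
      contDiff_const.prodMk contDiff_id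
    have hgC1 : ∀ i, ContDiff ℝ 1 (g i) := by
      intro i
      exact contDiff_const.mul ((hu1.comp hslice).mul ((hv1 i).comp hslice))
    have hdiveq := MeasureTheory.integral_divergence_of_hasFDerivAt_off_countable'
      (n := 2) a b hab g (fun i x => fderiv ℝ (g i) x) ∅ Set.countable_empty
      (fun i => ((hgC1 i).continuous).continuousOn)
      (fun x _ i => (((hgC1 i).differentiable (by norm_num)) x).hasFDerivAt)
      ((Continuous.locallyIntegrable (continuous_finset_sum _ fun i _ =>
        (((hgC1 i).fderiv_right (m := 0) (by norm_num)).clm_apply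
          contDiff_const).continuous)).integrableOn_isCompact isCompact_Icc)
    -- pointwise identification of the divergence with Dfun on the open half space
    have hpt : ∀ x : Fin 3 → ℝ, 0 < x 0 →
        (∑ i, fderiv ℝ (g i) x (Pi.single i 1)) = Dfun C (t, x) := by
      intro x hx
      have hGd : ∀ i : Fin 3, Differentiable ℝ
          (fun p : ℝ × (Fin 3 → ℝ) => dt C p * dx i C p) := fun i => hud.mul (hvd i)
      have hterm : ∀ i : Fin 3, fderiv ℝ (g i) x (Pi.single i 1)
          = 2 * (dx i (dt C) (t, x) * dx i C (t, x) + dt C (t, x) * dx i (dx i C) (t, x)) := by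
        intro i
        have hdiffslice : DifferentiableAt ℝ
            (fun y : Fin 3 → ℝ => dt C (t, y) * dx i C (t, y)) x :=
          ((hGd i).comp ((differentiable_const t).prodMk differentiable_id)).differentiableAt
        have h1 : fderiv ℝ (g i) x
            = (2 : ℝ) • fderiv ℝ (fun y => dt C (t, y) * dx i C (t, y)) x := by
          rw [hg]
          exact fderiv_const_mul hdiffslice 2
        have h2 : fderiv ℝ (fun y => dt C (t, y) * dx i C (t, y)) x (Pi.single i 1)
            = dx i (fun p : ℝ × (Fin 3 → ℝ) => dt C p * dx i C p) (t, x) :=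
          fderiv_space (hGd i) t x i
        have h3 : dx i (fun p : ℝ × (Fin 3 → ℝ) => dt C p * dx i C p) (t, x)
            = dx i (dt C) (t, x) * dx i C (t, x) + dt C (t, x) * dx i (dx i C) (t, x) :=
          dx_mul hud (hvd i) i (t, x)
        rw [h1]
        simp only [ContinuousLinearMap.smul_apply, smul_eq_mul]
        rw [h2, h3]
      have hw := hwave (t, x) hx
      unfold Dfun
      simp only [Fin.sum_univ_three] at hw ⊢
      rw [hterm 0, hterm 1, hterm 2, hw]
      have hm0 := mixed_symm hC (t, x) 0
      have hm1 := mixed_symm hC (t, x) 1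
      have hm2 := mixed_symm hC (t, x) 2
      rw [← hm0, ← hm1, ← hm2]
      ring
    have hIeq : (∫ x in Set.Icc a b, Dfun C (t, x))
        = ∫ x in Set.Icc a b, ∑ i, fderiv ℝ (g i) x (Pi.single i 1) := by
      apply setIntegral_congr_ae measurableSet_Icc
      filter_upwards [hae0] with x hx hxbox
      have h0 : 0 < x 0 := by
        have h1 := hxbox.1 0
        simp [ha] at h1
        exact lt_of_le_of_ne h1 (Ne.symm hx)
      exact (hpt x h0).symm
    rw [hIeq, hdiveq, Fin.sum_univ_three]
    -- the far faces vanish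
    have hfront : ∀ (i : Fin 3) (y : Fin 2 → ℝ), g i (i.insertNth (b i) y) = 0 := by
      intro i y
      have hmem : (i.insertNth (b i) y) ∉ S := by
        intro hmem
        have h1 := hMS _ hmem i
        rw [Fin.insertNth_apply_same] at h1
        have : |M + 1| ≤ M := by simpa [hb] using h1
        rw [abs_of_nonneg (by linarith)] at this
        linarith
      simp [hg, hu0 t _ hmem]
    have hback : ∀ (i : Fin 3), i ≠ 0 → ∀ (y : Fin 2 → ℝ), g i (i.insertNth (a i) y) = 0 := by
      intro i hi y
      have hmem : (i.insertNth (a i) y) ∉ S := by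
        intro hmem
        have h1 := hMS _ hmem i
        rw [Fin.insertNth_apply_same] at h1
        have : |(-(M + 1) : ℝ)| ≤ M := by simpa [ha, hi] using h1
        rw [abs_neg, abs_of_nonneg (by linarith)] at this
        linarith
      simp [hg, hu0 t _ hmem]
    have hback0 : ∀ (y : Fin 2 → ℝ), 0 ≤ g 0 ((0 : Fin 3).insertNth (a 0) y) := by
      intro y
      set z : Fin 3 → ℝ := Fin.insertNth (0 : Fin 3) (a 0) y with hzdef
      have hx0 : z 0 = 0 := by
        rw [hzdef, Fin.insertNth_apply_same]; simp [ha]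
      have hbceq := hbc t z hx0
      have hα2 : α ^ 2 ≤ 1 := by
        have h1 := abs_le.1 hα
        nlinarith [h1.1, h1.2]
      show (0 : ℝ) ≤ 2 * (dt C (t, z) * dx 0 C (t, z))
      set u := dt C (t, z) with hu
      set v := dx 0 C (t, z) with hv
      have hsq : (u - v) ^ 2 = α ^ 2 * (u + v) ^ 2 := by rw [hbceq]; ring
      nlinarith [sq_nonneg (u + v), sq_nonneg (u - v)]
    have hnn : 0 ≤ ∫ (y : Fin 2 → ℝ) in
        Set.Icc (a ∘ Fin.succAbove 0) (b ∘ Fin.succAbove 0),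
        g 0 (Fin.insertNth 0 (a 0) y) :=
      setIntegral_nonneg measurableSet_Icc fun y _ => hback0 y
    simp only [hfront, hback 1 (by decide), hback 2 (by decide), integral_zero]
    linarith [hnn]
  -- energy is nonincreasing
  have hEdiff : Differentiable ℝ E := fun s => (hEderiv s).differentiableAt
  have hanti : Antitone E := by
    apply antitone_of_deriv_nonpos hEdiff
    intro s
    rw [(hEderiv s).deriv]
    exact hDiv s
  constructor
  · intro t₁ t₂ _ h12
    rw [hEeq t₁, hEeq t₂]
    exact hanti h12
  · intro hz hdz
    have hv00 : ∀ (i : Fin 3) (y : Fin 3 → ℝ), 0 < y 0 → dx i C (0, y) = 0 := by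
      intro i y hy
      have hslice0 : (fun z : Fin 3 → ℝ => C (0, z)) =ᶠ[nhds y] fun _ => 0 := by
        filter_upwards [hHopen.mem_nhds hy] with z hz'
        exact hz z hz'
      have h1 : fderiv ℝ (fun z : Fin 3 → ℝ => C (0, z)) y = 0 := by
        rw [hslice0.fderiv_eq, fderiv_fun_const]; rfl
      have h2 := fderiv_space hCd 0 y i
      rw [h1] at h2
      simpa using h2.symm
    have hE0 : E 0 = 0 := by
      rw [← hEeq 0]
      rw [setIntegral_congr_fun (g := fun _ => (0 : ℝ)) hHopen.measurableSet ?_]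
      · simp
      · intro y hy
        have h1 : dt C (0, y) = 0 := hdz y hy
        simp [h1, hv00 _ y hy]
    have hEt : ∀ s : ℝ, 0 ≤ s → E s = 0 := by
      intro s hs
      have h1 : E s ≤ 0 := hE0 ▸ hanti hs
      have h2 : 0 ≤ E s := setIntegral_nonneg measurableSet_Icc fun y _ => he_nonneg _
      linarith
    have hu_zero : ∀ s : ℝ, 0 ≤ s → ∀ y : Fin 3 → ℝ, 0 < y 0 → dt C (s, y) = 0 := by
      intro s hs y hy
      have hint0 : (∫ z in {x : Fin 3 → ℝ | 0 < x 0}, efun C (s, z)) = 0 := by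
        have h := hEeq s
        rw [hEt s hs] at h
        exact h
      have hes : efun C (s, y) = 0 := by
        by_contra hne
        have hpos : 0 < efun C (s, y) := lt_of_le_of_ne (he_nonneg _) (Ne.symm hne)
        have hopen2 : IsOpen ({z : Fin 3 → ℝ | 0 < efun C (s, z)} ∩ {x : Fin 3 → ℝ | 0 < x 0}) :=
          (isOpen_lt continuous_const (hefun_cont.comp (Continuous.prodMk_right s))).inter hHopen
        obtain ⟨ρ, hρ0, hρsub⟩ := Metric.isOpen_iff.1 hopen2 y ⟨hpos, hy⟩
        have hCS : HasCompactSupport (fun z : Fin 3 → ℝ => efun C (s, z)) := by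
          apply HasCompactSupport.intro hS
          intro z hzS
          exact hsupp_e s z hzS
        have hintg : IntegrableOn (fun z : Fin 3 → ℝ => efun C (s, z))
            {x : Fin 3 → ℝ | 0 < x 0} :=
          ((hefun_cont.comp (Continuous.prodMk_right s)).integrable_of_hasCompactSupport
            hCS).integrableOn
        have hposint : 0 < ∫ z in {x : Fin 3 → ℝ | 0 < x 0}, efun C (s, z) := by
          rw [setIntegral_pos_iff_support_of_nonneg_ae
            (Filter.Eventually.of_forall fun z => he_nonneg _) hintg]
          have hsub2 : Metric.ball y ρ ⊆
              (Function.support fun z => efun C (s, z)) ∩ {x : Fin 3 → ℝ | 0 < x 0} :=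
            fun z hzm => ⟨ne_of_gt (hρsub hzm).1, (hρsub hzm).2⟩
          exact lt_of_lt_of_le (Metric.measure_ball_pos volume y hρ0) (measure_mono hsub2)
        rw [hint0] at hposint
        exact lt_irrefl 0 hposint
      have hsum : 0 ≤ ∑ i, dx i C (s, y) ^ 2 := Finset.sum_nonneg fun i _ => sq_nonneg _
      have h2 : dt C (s, y) ^ 2 ≤ 0 := by
        have h3 : dt C (s, y) ^ 2 + ∑ i, dx i C (s, y) ^ 2 = 0 := hes
        linarith
      have h3 : dt C (s, y) ^ 2 = 0 := le_antisymm h2 (sq_nonneg _)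
      exact pow_eq_zero_iff (by norm_num : (2:ℕ) ≠ 0) |>.1 h3
    intro t x ht hx
    rcases eq_or_lt_of_le ht with rfl | htpos
    · exact hz x hx
    · have hcont : ContinuousOn (fun s : ℝ => C (s, x)) (Set.Icc 0 t) :=
        (hC.continuous.comp (continuous_id.prodMk continuous_const)).continuousOn
      have hdiffOn : DifferentiableOn ℝ (fun s : ℝ => C (s, x)) (interior (Set.Icc 0 t)) := by
        intro s _
        exact ((hasDerivAt_time hCd s x).differentiableAt).differentiableWithinAt
      have hderiv0 : ∀ s ∈ interior (Set.Icc 0 t), deriv (fun τ : ℝ => C (τ, x)) s = 0 := by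
        intro s hsmem
        rw [interior_Icc] at hsmem
        rw [(hasDerivAt_time hCd s x).deriv]
        exact hu_zero s (le_of_lt hsmem.1) x hx
      have hmono := monotoneOn_of_deriv_nonneg (convex_Icc 0 t) hcont hdiffOn
        (fun s hsmem => le_of_eq (hderiv0 s hsmem).symm)
      have hanti2 := antitoneOn_of_deriv_nonpos (convex_Icc 0 t) hcont hdiffOn
        (fun s hsmem => le_of_eq (hderiv0 s hsmem))
      have hmem0 : (0 : ℝ) ∈ Set.Icc (0 : ℝ) t := Set.left_mem_Icc.2 ht
      have hmemt : t ∈ Set.Icc (0 : ℝ) t := Set.right_mem_Icc.2 ht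
      have h1 := hmono hmem0 hmemt ht
      have h2 := hanti2 hmem0 hmemt ht
      have h0 : C (0, x) = 0 := hz x hx
      have h1' : C (0, x) ≤ C (t, x) := h1
      have h2' : C (t, x) ≤ C (0, x) := h2
      rw [h0] at h1' h2'
      exact le_antisymm h2' h1'
end

section
/- Let P > 0 and A, B ∈ ℝ with (A,B) ≠ (0,0), and define ψ : {ζ ∈ ℂ : Re ζ > 0} → ℂ by ψ(ζ) = Aζ − B(ζ² + P²)^{1/2}, where (·)^{1/2} is the principal square root. Then ψ has a zero in {Re ζ > 0} if and only if (A > B and B > 0) or (A < B and B < 0). -/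
/-!
Squaring `Aζ = B (ζ² + P²)^{1/2}` gives `(A² - B²) ζ² = B² P²`, so `ζ²` is real, and a complex
number with positive real part and real square is itself real. On the positive real axis the
equation reads `A a = B √(a² + P²)` with `√(a² + P²) > a > 0`, so `A = t B` for some `t > 1`;
conversely every `t > 1` is a ratio `√(a² + P²) / a`.
-/

open Complex

noncomputable def psi (P A B : ℝ) (ζ : ℂ) : ℂ :=
  A * ζ - B * (ζ ^ 2 + (P : ℂ) ^ 2) ^ ((1 : ℂ) / 2)

lemma Complex.ofReal_cpow_half {x : ℝ} (hx : 0 ≤ x) : (x : ℂ) ^ ((1 : ℂ) / 2) = (√x : ℝ) := by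
  rw [Real.sqrt_eq_rpow, ofReal_cpow hx]
  norm_num

lemma Complex.cpow_half_sq (z : ℂ) : (z ^ ((1 : ℂ) / 2)) ^ 2 = z := by
  simp [one_div]

lemma Complex.im_eq_zero_of_sq_eq_ofReal {z : ℂ} (hz : z.re ≠ 0) {c : ℝ} (h : z ^ 2 = c) :
    z.im = 0 := by
  simpa [sq, mul_comm z.im, ← two_mul, hz] using congrArg im h

lemma exists_sqrt_sq_add_sq_eq_mul {P t : ℝ} (hP : P ≠ 0) (ht : 1 < t) :
    ∃ a > 0, √(a ^ 2 + P ^ 2) = t * a := by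
  have hD : 0 < t ^ 2 - 1 := by nlinarith
  set d := √(t ^ 2 - 1)
  have hd : 0 < d := Real.sqrt_pos.mpr hD
  refine ⟨|P| / d, by positivity, ?_⟩
  rw [Real.sqrt_eq_iff_mul_self_eq (by positivity) (by positivity)]
  field_simp
  rw [Real.sq_sqrt hD.le, sq_abs]
  ring

lemma exists_pos_mul_eq_mul_sqrt_iff {P A B : ℝ} (hP : P ≠ 0) (hAB : (A, B) ≠ (0, 0)) :
    (∃ a > 0, A * a = B * √(a ^ 2 + P ^ 2)) ↔ (B < A ∧ 0 < B) ∨ (A < B ∧ B < 0) := by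
  constructor
  · rintro ⟨a, ha, h⟩
    have hs : a < √(a ^ 2 + P ^ 2) :=
      (Real.lt_sqrt ha.le).mpr (lt_add_of_pos_right _ (by positivity))
    rcases lt_trichotomy B 0 with hB | rfl | hB
    · right; constructor <;> nlinarith
    · obtain rfl : A = 0 := by simpa [ha.ne'] using h
      exact absurd rfl hAB
    · left; constructor <;> nlinarith
  · intro h
    obtain ⟨t, ht, rfl⟩ : ∃ t > 1, A = t * B := by
      rcases h with ⟨h₁, h₂⟩ | ⟨h₁, h₂⟩
      · exact ⟨A / B, (one_lt_div h₂).mpr h₁, (div_mul_cancel₀ A h₂.ne').symm⟩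
      · exact ⟨A / B, (one_lt_div_of_neg h₂).mpr h₁, (div_mul_cancel₀ A h₂.ne).symm⟩
    obtain ⟨a, ha, hs⟩ := exists_sqrt_sq_add_sq_eq_mul hP ht
    exact ⟨a, ha, by rw [hs]; ring⟩

lemma psi_ofReal (P A B a : ℝ) :
    psi P A B a = (A * a - B * √(a ^ 2 + P ^ 2) : ℝ) := by
  rw [psi, ofReal_sub, ofReal_mul, ofReal_mul, ← ofReal_cpow_half (by positivity)]
  push_cast
  rfl

lemma sq_mul_eq_of_psi_eq_zero {P A B : ℝ} {ζ : ℂ} (h : psi P A B ζ = 0) :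
    ((A : ℂ) ^ 2 - (B : ℂ) ^ 2) * ζ ^ 2 = (B : ℂ) ^ 2 * (P : ℂ) ^ 2 := by
  have hw := cpow_half_sq (ζ ^ 2 + (P : ℂ) ^ 2)
  rw [psi] at h
  linear_combination (A * ζ + B * (ζ ^ 2 + (P : ℂ) ^ 2) ^ ((1 : ℂ) / 2)) * h + (B : ℂ) ^ 2 * hw

lemma exists_psi_eq_zero_iff {P A B : ℝ} (hP : P ≠ 0) (hAB : (A, B) ≠ (0, 0)) :
    (∃ ζ : ℂ, 0 < ζ.re ∧ psi P A B ζ = 0) ↔ ∃ a > 0, A * a = B * √(a ^ 2 + P ^ 2) := by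
  constructor
  · rintro ⟨ζ, hre, h⟩
    have hsq : ((A ^ 2 - B ^ 2 : ℝ) : ℂ) * ζ ^ 2 = (B ^ 2 * P ^ 2 : ℝ) := by
      push_cast
      exact sq_mul_eq_of_psi_eq_zero h
    have hD : A ^ 2 - B ^ 2 ≠ 0 := by
      intro hD
      rw [hD, ofReal_zero, zero_mul, eq_comm, ofReal_eq_zero] at hsq
      obtain rfl : B = 0 := by simpa [hP] using hsq
      exact hAB (by simpa using hD)
    have hreal : ζ ^ 2 = ((B ^ 2 * P ^ 2 / (A ^ 2 - B ^ 2) : ℝ) : ℂ) := by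
      rw [ofReal_div, eq_div_iff (ofReal_ne_zero.mpr hD), mul_comm, hsq]
    have hζ : ζ = (ζ.re : ℂ) := ext rfl (by simpa using im_eq_zero_of_sq_eq_ofReal hre.ne' hreal)
    refine ⟨ζ.re, hre, ?_⟩
    rw [hζ, psi_ofReal] at h
    exact sub_eq_zero.mp (by exact_mod_cast h)
  · rintro ⟨a, ha, h⟩
    refine ⟨a, by simpa using ha, ?_⟩
    rw [psi_ofReal, sub_eq_zero.mpr h, ofReal_zero]

/-- For `P > 0` and `(A, B) ≠ (0, 0)`, the function `ψ(ζ) = Aζ − B√(ζ² + P²)` (principal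
square root) has a zero in the right half-plane `{Re ζ > 0}` if and only if
`A > B > 0` or `A < B < 0`. -/
theorem psi_has_zero_iff
    (P A B : ℝ) (hP : 0 < P) (hAB : (A, B) ≠ (0, 0)) :
    (∃ ζ : ℂ, 0 < ζ.re ∧
        (A : ℂ) * ζ - (B : ℂ) * ((ζ ^ 2 + (P : ℂ) ^ 2) ^ ((1 : ℂ) / 2)) = 0) ↔
      ((B < A ∧ 0 < B) ∨ (A < B ∧ B < 0)) :=
  (exists_psi_eq_zero_iff hP.ne' hAB).trans (exists_pos_mul_eq_mul_sqrt_iff hP.ne' hAB)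
end

section
/- Let θ > 0. Then there exists a constant K > 0 such that for all s ∈ ℂ with Re s > 0 and all real w ≥ 0, writing μ = (s² + w²)^{1/2} (principal square root) and r = √(|s² + w²| + |s|²), one has both r ≤ K·|μ + θs| and r ≤ K·|θμ + s|. (This is the uniform boundedness, in the Kreiss condition, of the mode coefficients σ for the radiation-controlling constraint-preserving boundary conditions, with θ = (1+α)/(1−α), |α| < 1.) -/
open Complex in
lemma cpow_half_re_nonneg (z : ℂ) : 0 ≤ (z ^ ((1 : ℂ) / 2)).re := by
  by_cases hz : z = 0
  · simp [hz, Complex.zero_cpow (by norm_num : (1:ℂ)/2 ≠ 0)]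
  rw [Complex.cpow_def_of_ne_zero hz, Complex.exp_re]
  have him : (Complex.log z * ((1:ℂ)/2)).im = z.arg / 2 := by
    simp [Complex.mul_im, Complex.log_im, Complex.log_re]
    ring
  rw [him]
  have h1 := Complex.neg_pi_lt_arg z
  have h2 := Complex.arg_le_pi z
  have : 0 ≤ Real.cos (z.arg / 2) :=
    Real.cos_nonneg_of_neg_pi_div_two_le_of_le (by linarith) (by linarith)
  positivity

/-- Kreiss condition for the new radiation-controlling constraint-preserving boundary
conditions: for `θ > 0` there is a uniform constant `K > 0` such that, for all `s` with
`Re s > 0` and all `w ≥ 0`, with `μ = (s² + w²)^{1/2}` (principal square root) and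
`r = √(|s² + w²| + |s|²)`, one has `r ≤ K|μ + θs|` and `r ≤ K|θμ + s|`. -/
theorem kreiss_condition_new_bc (θ : ℝ) (hθ : 0 < θ) :
    ∃ K : ℝ, 0 < K ∧ ∀ s : ℂ, 0 < s.re → ∀ w : ℝ, 0 ≤ w →
      Real.sqrt (‖s ^ 2 + (w : ℂ) ^ 2‖ + (‖s‖) ^ 2) ≤
          K * ‖(s ^ 2 + (w : ℂ) ^ 2) ^ ((1 : ℂ) / 2) + (θ : ℂ) * s‖ ∧
      Real.sqrt (‖s ^ 2 + (w : ℂ) ^ 2‖ + (‖s‖) ^ 2) ≤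
          K * ‖(θ : ℂ) * ((s ^ 2 + (w : ℂ) ^ 2) ^ ((1 : ℂ) / 2)) + s‖ := by
  refine ⟨(1 + θ) / θ, by positivity, ?_⟩
  intro s hs w hw
  set z : ℂ := s ^ 2 + (w : ℂ) ^ 2 with hzdef
  set μ : ℂ := z ^ ((1 : ℂ) / 2) with hμdef
  have hμ2 : μ ^ 2 = z := by
    rw [hμdef, show (1 : ℂ) / 2 = ((2 : ℕ) : ℂ)⁻¹ by norm_num]
    exact Complex.cpow_nat_inv_pow z two_ne_zero
  have hre : 0 ≤ μ.re := cpow_half_re_nonneg z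
  -- coordinates of z
  have hzim : z.im = 2 * s.re * s.im := by
    simp [hzdef, pow_two, Complex.mul_im]
    ring
  -- z.im also equals 2 μ.re μ.im
  have hzim' : z.im = 2 * μ.re * μ.im := by
    rw [← hμ2]; simp [pow_two, Complex.mul_im]; ring
  have hkey : 0 ≤ μ.im * s.im := by
    have h := hzim.symm.trans hzim'
    have h2 := congrArg (· * μ.im) h
    nlinarith [mul_nonneg hre (sq_nonneg μ.im), hs]
  have habsz : ‖z‖ = μ.re ^ 2 + μ.im ^ 2 := by
    rw [← hμ2, norm_pow, ← Complex.normSq_eq_norm_sq, Complex.normSq_apply]; ring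
  have habss : (‖s‖) ^ 2 = s.re ^ 2 + s.im ^ 2 := by
    rw [← Complex.normSq_eq_norm_sq, Complex.normSq_apply]; ring
  constructor
  · rw [← Real.sqrt_sq (show (0:ℝ) ≤ (1 + θ) / θ * ‖μ + (θ:ℂ) * s‖ by positivity)]
    apply Real.sqrt_le_sqrt
    rw [mul_pow]
    simp only [Complex.sq_norm, Complex.normSq_apply, habsz]
    simp only [Complex.add_re, Complex.add_im, Complex.mul_re, Complex.mul_im,
      Complex.ofReal_re, Complex.ofReal_im]
    have h1 : 0 ≤ μ.re * s.re := mul_nonneg hre hs.le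
    rw [div_pow, div_mul_eq_mul_div, le_div_iff₀ (by positivity : (0:ℝ) < θ ^ 2)]
    nlinarith [mul_nonneg (by positivity : (0:ℝ) ≤ 1 + 2 * θ) (add_nonneg (sq_nonneg μ.re) (sq_nonneg μ.im)),
      mul_nonneg (by positivity : (0:ℝ) ≤ θ ^ 2 * (2 * θ + θ ^ 2)) (add_nonneg (sq_nonneg s.re) (sq_nonneg s.im)),
      mul_nonneg (by positivity : (0:ℝ) ≤ 2 * θ * (1 + θ) ^ 2) h1,
      mul_nonneg (by positivity : (0:ℝ) ≤ 2 * θ * (1 + θ) ^ 2) hkey]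
  · rw [← Real.sqrt_sq (show (0:ℝ) ≤ (1 + θ) / θ * ‖(θ:ℂ) * μ + s‖ by positivity)]
    apply Real.sqrt_le_sqrt
    rw [mul_pow]
    simp only [Complex.sq_norm, Complex.normSq_apply, habsz]
    simp only [Complex.add_re, Complex.add_im, Complex.mul_re, Complex.mul_im,
      Complex.ofReal_re, Complex.ofReal_im]
    have h1 : 0 ≤ μ.re * s.re := mul_nonneg hre hs.le
    rw [div_pow, div_mul_eq_mul_div, le_div_iff₀ (by positivity : (0:ℝ) < θ ^ 2)]
    nlinarith [mul_nonneg (by positivity : (0:ℝ) ≤ 1 + 2 * θ) (add_nonneg (sq_nonneg s.re) (sq_nonneg s.im)),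
      mul_nonneg (by positivity : (0:ℝ) ≤ θ ^ 2 * (2 * θ + θ ^ 2)) (add_nonneg (sq_nonneg μ.re) (sq_nonneg μ.im)),
      mul_nonneg (by positivity : (0:ℝ) ≤ 2 * θ * (1 + θ) ^ 2) h1,
      mul_nonneg (by positivity : (0:ℝ) ≤ 2 * θ * (1 + θ) ^ 2) hkey]
end

section
/- For every real w > 0 and every constant K > 0 there exists s ∈ ℂ with Re s > 0 such that, writing μ = (s² + w²)^{1/2} (principal square root), √(|s² + w²| + |s|²) > K·|μ|·|μ + s|. (Hence the coefficient r/(μ(μ + s)) arising from the radiative differential constraint-preserving boundary condition obtained by the standard subsidiary-system approach cannot be bounded uniformly, i.e. that condition fails the Kreiss condition.) -/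
/-- Failure of the Kreiss condition for the radiative differential constraint-preserving
boundary condition from the standard subsidiary-system approach: for every `w > 0` and
every `K > 0` there exists `s` with `Re s > 0` such that, with
`μ = (s² + w²)^{1/2}` (principal square root),
`√(|s² + w²| + |s|²) > K|μ||μ + s|`. -/
theorem radiative_subsidiary_fails_kreiss (w : ℝ) (hw : 0 < w) (K : ℝ) (hK : 0 < K) :
    ∃ s : ℂ, 0 < s.re ∧
      K * ‖(s ^ 2 + (w : ℂ) ^ 2) ^ ((1 : ℂ) / 2)‖ *
          ‖(s ^ 2 + (w : ℂ) ^ 2) ^ ((1 : ℂ) / 2) + s‖ <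
        Real.sqrt (‖s ^ 2 + (w : ℂ) ^ 2‖ + ‖s‖ ^ 2) := by
  set C : ℝ := Real.sqrt (1 + 2*w) * (Real.sqrt (1 + 2*w) + 1 + w) with hC
  have h1w : (0:ℝ) < 1 + 2*w := by linarith
  have hCpos : 0 < C := by
    have h1 : 0 < Real.sqrt (1 + 2*w) := Real.sqrt_pos.mpr h1w
    have h2 : 0 < Real.sqrt (1 + 2*w) + 1 + w := by linarith
    positivity
  set δ : ℝ := w / (K * C) with hδ
  have hδpos : 0 < δ := by positivity
  set ε : ℝ := min 1 (δ^2/2) with hε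
  have hεpos : 0 < ε := lt_min one_pos (by positivity)
  have hε1 : ε ≤ 1 := min_le_left _ _
  refine ⟨(ε : ℂ) + w * Complex.I, ?_, ?_⟩
  · simp [hεpos]
  set s : ℂ := (ε : ℂ) + w * Complex.I with hs
  have hz : s ^ 2 + (w : ℂ) ^ 2 = (ε^2 : ℝ) + ((2*ε*w : ℝ)) * Complex.I := by
    rw [hs]; push_cast; ring_nf; rw [Complex.I_sq]; ring
  set z : ℂ := s ^ 2 + (w : ℂ) ^ 2 with hzdef
  have habsz : ‖z‖ ≤ ε * (1 + 2*w) := by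
    rw [hz]
    calc ‖(ε^2 : ℝ) + ((2*ε*w : ℝ)) * Complex.I‖
        ≤ ‖((ε^2 : ℝ):ℂ)‖ + ‖((2*ε*w : ℝ):ℂ) * Complex.I‖ :=
          norm_add_le _ _
      _ = ε^2 + 2*ε*w := by
          simp [Complex.norm_real, abs_of_pos hεpos, abs_of_pos hw,
            abs_of_nonneg (by positivity : (0:ℝ) ≤ ε^2)]
      _ ≤ ε * (1 + 2*w) := by nlinarith
  have hzne : z ≠ 0 := by
    rw [hz]
    intro h
    have him := congrArg Complex.im h
    simp [Complex.add_im, Complex.ofReal_im, Complex.mul_im, ← Complex.ofReal_pow] at him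
    rcases him with h2 | h2
    exacts [hεpos.ne' h2, hw.ne' h2]
  have habsμ : ‖z ^ ((1:ℂ)/2)‖ = (‖z‖) ^ ((1:ℝ)/2) := by
    rw [Complex.norm_cpow_of_ne_zero hzne]
    simp
  have hμle : ‖z ^ ((1:ℂ)/2)‖ ≤ Real.sqrt ε * Real.sqrt (1 + 2*w) := by
    rw [habsμ]
    calc (‖z‖) ^ ((1:ℝ)/2) ≤ (ε * (1 + 2*w)) ^ ((1:ℝ)/2) := by
          apply Real.rpow_le_rpow (norm_nonneg z) habsz (by norm_num)
      _ = Real.sqrt (ε * (1 + 2*w)) := (Real.sqrt_eq_rpow _).symm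
      _ = Real.sqrt ε * Real.sqrt (1 + 2*w) := Real.sqrt_mul hεpos.le _
  have hsqε : Real.sqrt ε ≤ 1 := by
    rw [show (1:ℝ) = Real.sqrt 1 from (Real.sqrt_one).symm]
    exact Real.sqrt_le_sqrt hε1
  have hsabs : ‖s‖ ≤ 1 + w := by
    calc ‖s‖ ≤ ‖(ε:ℂ)‖ + ‖(w:ℂ)*Complex.I‖ :=
          norm_add_le _ _
      _ = ε + w := by simp [abs_of_pos hεpos, abs_of_pos hw]
      _ ≤ 1 + w := by linarith
  have hμle2 : ‖z ^ ((1:ℂ)/2)‖ ≤ Real.sqrt (1+2*w) := by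
    calc ‖z ^ ((1:ℂ)/2)‖ ≤ Real.sqrt ε * Real.sqrt (1+2*w) := hμle
      _ ≤ 1 * Real.sqrt (1+2*w) :=
          mul_le_mul_of_nonneg_right hsqε (Real.sqrt_nonneg _)
      _ = Real.sqrt (1+2*w) := one_mul _
  have hμsle : ‖z ^ ((1:ℂ)/2) + s‖ ≤ Real.sqrt (1+2*w) + 1 + w := by
    calc ‖z ^ ((1:ℂ)/2) + s‖
        ≤ ‖z ^ ((1:ℂ)/2)‖ + ‖s‖ := norm_add_le _ _
      _ ≤ Real.sqrt (1+2*w) + (1 + w) := add_le_add hμle2 hsabs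
      _ = Real.sqrt (1+2*w) + 1 + w := by ring
  have hLHS : K * ‖z ^ ((1:ℂ)/2)‖ * ‖z ^ ((1:ℂ)/2) + s‖
      ≤ K * Real.sqrt ε * C := by
    have hmm := mul_le_mul hμle hμsle (norm_nonneg _) (by positivity)
    calc K * ‖z ^ ((1:ℂ)/2)‖ * ‖z ^ ((1:ℂ)/2) + s‖
        = K * (‖z ^ ((1:ℂ)/2)‖ * ‖z ^ ((1:ℂ)/2) + s‖) := by ring
      _ ≤ K * ((Real.sqrt ε * Real.sqrt (1+2*w)) * (Real.sqrt (1+2*w) + 1 + w)) :=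
          mul_le_mul_of_nonneg_left hmm hK.le
      _ = K * Real.sqrt ε * C := by rw [hC]; ring
  have hlt : K * Real.sqrt ε * C < w := by
    have hsε : Real.sqrt ε < δ := by
      have h2 : ε < δ^2 := lt_of_le_of_lt (min_le_right _ _) (by nlinarith)
      calc Real.sqrt ε < Real.sqrt (δ^2) := Real.sqrt_lt_sqrt hεpos.le h2
        _ = δ := Real.sqrt_sq hδpos.le
    calc K * Real.sqrt ε * C < K * δ * C :=
        mul_lt_mul_of_pos_right (mul_lt_mul_of_pos_left hsε hK) hCpos
      _ = w := by rw [hδ]; field_simp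
  have hRHS : w ≤ Real.sqrt (‖z‖ + (‖s‖)^2) := by
    rw [show w = Real.sqrt (w^2) from (Real.sqrt_sq hw.le).symm]
    apply Real.sqrt_le_sqrt
    have himw : w ≤ ‖s‖ := by
      have h3 := Complex.abs_im_le_norm s
      have h4 : s.im = w := by simp [hs]
      rw [h4, abs_of_pos hw] at h3
      exact h3
    nlinarith [norm_nonneg z]
  exact lt_of_le_of_lt hLHS (lt_of_lt_of_le hlt hRHS)
end
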